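/- arXiv:1510.05127 — 4 statements merged into one kernel-verified Lean document; each statement's English description precedes it below -/
import Mathlib

section
/- Let X be a completely metrizable topological space of weight κ ≥ ℵ₀, and let 𝓔 be a countable family of relations on X, each relation R ∈ 𝓔 being an Fσ subset of X^r for some finite arity r ≥ 1. Then exactly one of the following two statements holds: (S) there exists an ordinal γ < κ⁺ such that every 𝓔-independent subset of X has Cantor–Bendixson rank < γ (i.e. its γ-th Cantor–Bendixson derivative is empty); (P) there exists a perfect 𝓔-independent subset of X. -/
open Set Filter Cardinal FirstOrder

universe u v

/-- A topological space is completely metrizable if its topology is induced by a complete metric. -/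
def CompletelyMetrizable (Y : Type*) [t : TopologicalSpace Y] : Prop :=
  ∃ m : MetricSpace Y, m.toUniformSpace.toTopologicalSpace = t ∧ @CompleteSpace Y m.toUniformSpace

/-- The weight of a topological space: the least cardinality of a topological basis. -/
noncomputable def topWeight (X : Type u) [TopologicalSpace X] : Cardinal.{u} :=
  ⨅ B : { B : Set (Set X) // TopologicalSpace.IsTopologicalBasis B }, Cardinal.mk B.1

/-- A set is dense-in-itself if it is nonempty and has no isolated points
(in the subspace topology). -/
def DenseInItselfSet {X : Type*} [TopologicalSpace X] (S : Set X) : Prop :=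
  S.Nonempty ∧ ∀ x ∈ S, AccPt x (𝓟 S)

/-- A set is perfect if it is nonempty, completely metrizable in the subspace topology,
and has no isolated points. -/
def IsPerfectSet {X : Type*} [TopologicalSpace X] (P : Set X) : Prop :=
  P.Nonempty ∧ CompletelyMetrizable P ∧ ∀ x ∈ P, AccPt x (𝓟 P)

/-- The `γ`-th Cantor–Bendixson derivative of a set: iterate the operation of removing
isolated points, taking intersections at limit stages. -/
noncomputable def cbDeriv {X : Type u} [TopologicalSpace X] (A : Set X) (γ : Ordinal.{v}) :
    Set X :=
  Ordinal.limitRecOn γ A (fun _ ih => { x ∈ ih | AccPt x (𝓟 ih) })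
    (fun o _ ih => ⋂ (o' : Ordinal.{v}) (h : o' < o), ih o' h)

/-- `S` is independent with respect to the `n`-ary relation `R`. -/
def IsRelIndep {X : Type*} {n : ℕ} (R : Set (Fin n → X)) (S : Set X) : Prop :=
  ∀ s : Fin n → X, (∀ i, s i ∈ S) → Function.Injective s → s ∉ R

/-- `S` is a clique with respect to the `n`-ary relation `R`. -/
def IsRelClique {X : Type*} {n : ℕ} (R : Set (Fin n → X)) (S : Set X) : Prop :=
  ∀ s : Fin n → X, (∀ i, s i ∈ S) → Function.Injective s → s ∈ R

/-- A set is Fσ if it is a countable union of closed sets. -/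
def IsFsigma {Y : Type*} [TopologicalSpace Y] (s : Set Y) : Prop :=
  ∃ F : ℕ → Set Y, (∀ n, IsClosed (F n)) ∧ s = ⋃ n, F n

/-! If no bound `γ < κ⁺` exists, every stage `γ < κ⁺` of the derivative is reached by some
independent set. Finitely many disjoint open pieces sharing such witnesses can be split: a piece
meeting the `(γ+1)`-th derivative contains two points of the `γ`-th one, all these points lie in a
single independent set, and since the relations are closed, small basic neighbourhoods of them are
transversally independent for any finitely many relations. There are at most `κ` such basic
refinements and `κ⁺` is regular, so one refinement serves every `γ < κ⁺`. Iterating gives a Cantor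
scheme whose induced map embeds the Cantor space as a compact independent set without isolated
points. Conversely a perfect set is its own derivative at every stage. An `Fσ` relation is
replaced by its closed pieces. -/

open Topology Function Metric TopologicalSpace Encodable PiNat

section CantorBendixson

variable {X : Type u} [TopologicalSpace X] (A : Set X)

@[simp] theorem cbDeriv_zero : cbDeriv A (0 : Ordinal.{v}) = A :=
  Ordinal.limitRecOn_zero _ _ _

theorem cbDeriv_add_one (γ : Ordinal.{v}) :
    cbDeriv A (γ + 1) = {x ∈ cbDeriv A γ | AccPt x (𝓟 (cbDeriv A γ))} :=
  Ordinal.limitRecOn_add_one _ _ _ _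

theorem cbDeriv_limit {γ : Ordinal.{v}} (h : Order.IsSuccLimit γ) :
    cbDeriv A γ = ⋂ γ' < γ, cbDeriv A γ' :=
  Ordinal.limitRecOn_limit _ _ _ _ h

theorem cbDeriv_antitone : Antitone (cbDeriv A : Ordinal.{v} → Set X) := by
  intro γ δ
  induction δ using Ordinal.limitRecOn with
  | zero => intro h; rw [nonpos_iff_eq_zero.1 h]
  | add_one δ ih =>
    intro h
    rcases h.eq_or_lt with rfl | h
    · rfl
    · rw [cbDeriv_add_one]
      exact fun x hx => ih (Order.lt_add_one_iff.1 h) hx.1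
  | limit δ hδ _ =>
    intro h
    rcases h.eq_or_lt with rfl | h
    · rfl
    · rw [cbDeriv_limit A hδ]
      exact iInter₂_subset γ h

theorem cbDeriv_subset (γ : Ordinal.{v}) : cbDeriv A γ ⊆ A := by
  simpa using cbDeriv_antitone A (bot_le : ⊥ ≤ γ)

theorem cbDeriv_mono {A B : Set X} (h : A ⊆ B) (γ : Ordinal.{v}) :
    cbDeriv A γ ⊆ cbDeriv B γ := by
  induction γ using Ordinal.limitRecOn with
  | zero => simpa
  | add_one γ ih =>
    rw [cbDeriv_add_one, cbDeriv_add_one]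
    exact fun x hx => ⟨ih hx.1, hx.2.mono (principal_mono.2 ih)⟩
  | limit γ hγ ih =>
    rw [cbDeriv_limit A hγ, cbDeriv_limit B hγ]
    exact iInter₂_mono ih

theorem cbDeriv_inter_subset {U : Set X} (hU : IsOpen U) (γ : Ordinal.{v}) :
    cbDeriv A γ ∩ U ⊆ cbDeriv (A ∩ U) γ := by
  induction γ using Ordinal.limitRecOn with
  | zero => simp
  | add_one γ ih =>
    rw [cbDeriv_add_one, cbDeriv_add_one]
    rintro x ⟨⟨hx, hacc⟩, hxU⟩
    refine ⟨ih ⟨hx, hxU⟩, ?_⟩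
    exact (hacc.nhds_inter (hU.mem_nhds hxU)).mono (principal_mono.2 fun y hy => ih ⟨hy.2, hy.1⟩)
  | limit γ hγ ih =>
    rw [cbDeriv_limit A hγ, cbDeriv_limit _ hγ]
    rintro x ⟨hx, hxU⟩
    exact mem_iInter₂.2 fun γ' h => ih γ' h ⟨mem_iInter₂.1 hx γ' h, hxU⟩

theorem cbDeriv_eq_self {P : Set X} (hP : ∀ x ∈ P, AccPt x (𝓟 P)) (γ : Ordinal.{v}) :
    cbDeriv P γ = P := by
  induction γ using Ordinal.limitRecOn with
  | zero => simp
  | add_one γ ih =>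
    rw [cbDeriv_add_one, ih]
    exact sep_eq_self_iff_mem_true.2 hP
  | limit γ hγ ih =>
    rw [cbDeriv_limit P hγ]
    exact subset_antisymm ((iInter₂_subset 0 hγ.bot_lt).trans (ih 0 hγ.bot_lt).le)
      (subset_iInter₂ fun γ' h => (ih γ' h).ge)

end CantorBendixson

theorem exists_forall_lt_succ_ord {κ : Cardinal.{u}} (hκ : ℵ₀ ≤ κ) {T : Type u} (hT : #T ≤ κ)
    {P : T → Ordinal.{u} → Prop} (hP : ∀ t, Antitone (P t))
    (h : ∀ γ < (Order.succ κ).ord, ∃ t, P t γ) :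
    ∃ t, ∀ γ < (Order.succ κ).ord, P t γ := by
  by_contra! hne
  choose β hβ hPβ using hne
  have hsup : ⨆ t, β t < (Order.succ κ).ord := by
    refine Ordinal.iSup_lt_of_lt_cof ?_ hβ
    rw [(Cardinal.isRegular_succ hκ).cof_ord]
    exact hT.trans_lt (Order.lt_succ κ)
  obtain ⟨t, ht⟩ := h _ hsup
  exact hPβ t (hP t (Ordinal.le_iSup β t) ht)

theorem exists_isTopologicalBasis_mk_eq_topWeight (X : Type u) [TopologicalSpace X] :
    ∃ B : Set (Set X), IsTopologicalBasis B ∧ #B = topWeight X :=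
  have : Nonempty {B : Set (Set X) // IsTopologicalBasis B} :=
    ⟨⟨_, isTopologicalBasis_opens⟩⟩
  let ⟨B, hB⟩ := ciInf_mem fun B : {B : Set (Set X) // IsTopologicalBasis B} => #B.1
  ⟨B.1, B.2, hB⟩

section Relations

variable {X ν : Type*}

def IsRelIndepFamily {n : ℕ} (R : Set (Fin n → X)) (V : ν → Set X) : Prop :=
  ∀ φ : Fin n → ν, Injective φ → ∀ s : Fin n → X, (∀ k, s k ∈ V (φ k)) → s ∉ R

theorem IsRelIndepFamily.mono {n : ℕ} {R : Set (Fin n → X)} {V W : ν → Set X}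
    (hV : IsRelIndepFamily R V) (h : ∀ j, W j ⊆ V j) : IsRelIndepFamily R W :=
  fun φ hφ s hs => hV φ hφ s fun k => h _ (hs k)

theorem IsRelIndepFamily.comp {ν' : Type*} {n : ℕ} {R : Set (Fin n → X)} {V : ν → Set X}
    (hV : IsRelIndepFamily R V) {e : ν' → ν} (he : Injective e) : IsRelIndepFamily R (V ∘ e) :=
  fun φ hφ s hs => hV (e ∘ φ) (he.comp hφ) s hs

theorem isRelIndep_iUnion_iff {n : ℕ} {F : ℕ → Set (Fin n → X)} {S : Set X} :
    IsRelIndep (⋃ k, F k) S ↔ ∀ k, IsRelIndep (F k) S := by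
  simp only [IsRelIndep, mem_iUnion, not_exists]
  exact ⟨fun h k s hs hinj => h s hs hinj k, fun h s hs hinj k => h k s hs hinj⟩

theorem eventually_isRelIndepFamily_ball [PseudoMetricSpace X] [Finite ν] {n : ℕ}
    {R : Set (Fin n → X)} (hR : IsClosed R) {S : Set X} (hS : IsRelIndep R S) {x : ν → X}
    (hx : Injective x) (hxS : ∀ j, x j ∈ S) :
    ∀ᶠ δ in 𝓝 (0 : ℝ), IsRelIndepFamily R fun j => ball (x j) δ := by
  refine eventually_all.2 fun φ => ?_
  by_cases hφ : Injective φ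
  · obtain ⟨ε, hε, hball⟩ :=
      isOpen_iff.1 hR.isOpen_compl _ (hS _ (fun k => hxS _) (hx.comp hφ))
    filter_upwards [eventually_lt_nhds hε] with δ hδ _ s hs
    exact hball ((dist_pi_lt_iff hε).2 fun k => (mem_ball.1 (hs k)).trans hδ)
  · exact Eventually.of_forall fun _ h => (hφ h).elim

theorem eventually_pairwise_disjoint_ball [MetricSpace X] [Finite ν] {x : ν → X}
    (hx : Injective x) :
    ∀ᶠ δ in 𝓝 (0 : ℝ), Pairwise (Disjoint on fun j => ball (x j) δ) := by
  refine eventually_all.2 fun j => eventually_all.2 fun k => ?_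
  by_cases h : j = k
  · exact Eventually.of_forall fun _ h' => (h' h).elim
  · filter_upwards [eventually_lt_nhds (half_pos (dist_pos.2 (hx.ne h)))] with δ hδ _
    exact ball_disjoint_ball (by linarith)

end Relations

section Scheme

variable {X : Type u} {ι : Type*} {a : ι → ℕ} (C : ∀ i, Set (Fin (a i) → X)) (κ : Cardinal.{u})

/-- One witness `S` serves all pieces at once, so points picked in different pieces are jointly
independent. -/
def IsRich [TopologicalSpace X] {ν : Type*} (V : ν → Set X) : Prop :=
  ∀ γ < (Order.succ κ).ord, ∃ S : Set X, (∀ i, IsRelIndep (C i) S) ∧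
    ∀ j, (cbDeriv (S ∩ V j) γ).Nonempty

structure IsRichLevel [TopologicalSpace X] {ν : Type*} (V : ν → Set X) : Prop where
  isOpen : ∀ j, IsOpen (V j)
  pairwise_disjoint : Pairwise (Disjoint on V)
  isRich : IsRich C κ V

/-- Taking the pieces from a basis `B` with `#B ≤ κ` leaves at most `κ` refinements of `V`. -/
structure IsRefinement [PseudoMetricSpace X] {ν : Type*} (B : Set (Set X)) (I : Set ι) (ε : ℝ)
    (V : ν → Set X) (W : ν × Bool → Set X) : Prop where
  mem_basis : ∀ p, W p ∈ B
  closure_subset : ∀ p, closure (W p) ⊆ V p.1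
  pairwise_disjoint : Pairwise (Disjoint on W)
  ediam_le : ∀ p, ediam (W p) ≤ ENNReal.ofReal ε
  relIndep : ∀ i ∈ I, IsRelIndepFamily (C i) W

variable {C κ}

theorem IsRichLevel.comp [TopologicalSpace X] {ν ν' : Type*} {V : ν → Set X}
    (hV : IsRichLevel C κ V) {e : ν' → ν} (he : Injective e) : IsRichLevel C κ (V ∘ e) where
  isOpen j := hV.isOpen (e j)
  pairwise_disjoint := hV.pairwise_disjoint.comp_of_injective he
  isRich γ hγ :=
    let ⟨S, hS, hne⟩ := hV.isRich γ hγ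
    ⟨S, hS, fun j => hne (e j)⟩

theorem exists_injective_mem_cbDeriv [TopologicalSpace X] {ν : Type*} {V : ν → Set X}
    (hV : Pairwise (Disjoint on V)) {S : Set X} {γ : Ordinal.{v}}
    (hS : ∀ j, (cbDeriv (S ∩ V j) (γ + 1)).Nonempty) :
    ∃ x : ν × Bool → X, Injective x ∧ ∀ p, x p ∈ cbDeriv (S ∩ V p.1) γ := by
  choose x hx using hS
  simp only [cbDeriv_add_one] at hx
  choose y hy hyx using fun j => accPt_iff_nhds.1 (hx j).2 univ univ_mem
  have hmem : ∀ p : ν × Bool, cond p.2 (y p.1) (x p.1) ∈ cbDeriv (S ∩ V p.1) γ := by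
    rintro ⟨j, _ | _⟩
    exacts [(hx j).1, (hy j).2]
  refine ⟨fun p => cond p.2 (y p.1) (x p.1), fun p q hpq => ?_, hmem⟩
  have hV' : ∀ p : ν × Bool, cond p.2 (y p.1) (x p.1) ∈ V p.1 :=
    fun p => (cbDeriv_subset _ _ (hmem p)).2
  obtain ⟨j, b⟩ := p
  obtain ⟨k, c⟩ := q
  obtain rfl : j = k := by
    by_contra hjk
    exact (hV hjk).ne_of_mem (hV' (j, b)) (hV' (k, c)) hpq
  cases b <;> cases c <;> simp_all [eq_comm]

end Scheme

section Refinement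

variable {X : Type u} [MetricSpace X] {ι : Type*} {a : ι → ℕ} {C : ∀ i, Set (Fin (a i) → X)}
  {κ : Cardinal.{u}} {B : Set (Set X)} {I : Set ι} {ε : ℝ}

theorem ediam_ball_le_ofReal (x : X) {δ : ℝ} (hδ : 0 ≤ δ) :
    ediam (ball x δ) ≤ ENNReal.ofReal (2 * δ) :=
  ediam_le fun y hy z hz => edist_le_ofReal (by positivity) |>.2 <| by
    linarith [dist_triangle y x z, mem_ball.1 hy, mem_ball'.1 hz]

theorem exists_isRefinement_cbDeriv_nonempty {ν : Type*} [Finite ν]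
    (hB : IsTopologicalBasis B) (hC : ∀ i, IsClosed (C i)) (hI : I.Finite)
    (hε : 0 < ε) {V : ν → Set X} (hVo : ∀ j, IsOpen (V j)) (hVd : Pairwise (Disjoint on V))
    {S : Set X} (hSi : ∀ i, IsRelIndep (C i) S) {γ : Ordinal.{v}}
    (hS : ∀ j, (cbDeriv (S ∩ V j) (γ + 1)).Nonempty) :
    ∃ W, IsRefinement C B I ε V W ∧ ∀ p, (cbDeriv (S ∩ W p) γ).Nonempty := by
  obtain ⟨x, hx, hxD⟩ := exists_injective_mem_cbDeriv hVd hS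
  have hxS : ∀ p, x p ∈ S ∩ V p.1 := fun p => cbDeriv_subset _ _ (hxD p)
  obtain ⟨δ, ⟨hindep, hsub, hdisj, hδε⟩, hδ⟩ : ∃ δ : ℝ,
      ((∀ i ∈ I, IsRelIndepFamily (C i) fun p => ball (x p) δ) ∧
        (∀ p, closedBall (x p) δ ⊆ V p.1) ∧ Pairwise (Disjoint on fun p => ball (x p) δ) ∧
        δ < ε / 2) ∧ 0 < δ := by
    have hindep := (eventually_all_finite hI).2 fun i _ =>
      eventually_isRelIndepFamily_ball (hC i) (hSi i) hx fun p => (hxS p).1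
    have hsub := eventually_all.2 fun p =>
      eventually_closedBall_subset ((hVo p.1).mem_nhds (hxS p).2)
    refine ((hindep.and (hsub.and ((eventually_pairwise_disjoint_ball hx).and
      (eventually_lt_nhds (half_pos hε))))).filter_mono nhdsWithin_le_nhds).and
      (self_mem_nhdsWithin : Ioi (0 : ℝ) ∈ 𝓝[>] 0) |>.exists
  choose U hUB hxU hUsub using fun p =>
    hB.exists_subset_of_mem_open (mem_ball_self hδ) (isOpen_ball (x := x p))
  refine ⟨U, ⟨hUB, fun p => ?_, hdisj.mono fun p q h => h.mono (hUsub p) (hUsub q),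
    fun p => ?_, fun i hi => (hindep i hi).mono hUsub⟩, fun p => ⟨x p, ?_⟩⟩
  · exact (closure_mono (hUsub p)).trans (closure_ball_subset_closedBall.trans (hsub p))
  · exact (ediam_mono (hUsub p)).trans ((ediam_ball_le_ofReal _ hδ.le).trans
      (ENNReal.ofReal_le_ofReal (by linarith)))
  · exact cbDeriv_mono (inter_subset_inter_left _ inter_subset_left) γ
      (cbDeriv_inter_subset _ (hB.isOpen (hUB p)) γ ⟨hxD p, hxU p⟩)

theorem mk_isRefinement_le {ν : Type} [Finite ν] (hκ : ℵ₀ ≤ κ) (hBκ : #B ≤ κ)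
    (V : ν → Set X) : #{W // IsRefinement C B I ε V W} ≤ κ := by
  have hinj : Injective fun W : {W // IsRefinement C B I ε V W} =>
      fun p => (⟨W.1 p, W.2.mem_basis p⟩ : B) :=
    fun W W' h => Subtype.ext (funext fun p => congrArg Subtype.val (congrFun h p))
  refine (Cardinal.mk_le_of_injective hinj).trans ?_
  rw [Cardinal.mk_arrow, Cardinal.lift_uzero]
  exact (Cardinal.power_le_power_right hBκ).trans
    (Cardinal.pow_le hκ (Cardinal.lift_lt_aleph0.2 (Cardinal.lt_aleph0_of_finite _)))

theorem IsRichLevel.exists_isRefinement {ν : Type} [Finite ν] (hκ : ℵ₀ ≤ κ)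
    (hB : IsTopologicalBasis B) (hBκ : #B ≤ κ) (hC : ∀ i, IsClosed (C i))
    (hI : I.Finite) (hε : 0 < ε) {V : ν → Set X} (hV : IsRichLevel C κ V) :
    ∃ W, IsRefinement C B I ε V W ∧ IsRichLevel C κ W := by
  have hlim := Cardinal.isSuccLimit_ord (hκ.trans (Order.le_succ κ))
  obtain ⟨⟨W, hW⟩, hrich⟩ := exists_forall_lt_succ_ord hκ (mk_isRefinement_le hκ hBκ V)
    (P := fun W γ => ∃ S : Set X, (∀ i, IsRelIndep (C i) S) ∧
      ∀ p, (cbDeriv (S ∩ W.1 p) γ).Nonempty)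
    (fun W γ δ hγδ => by
      rintro ⟨S, hSi, hS⟩
      exact ⟨S, hSi, fun p => (hS p).mono (cbDeriv_antitone _ hγδ)⟩)
    (fun γ hγ => by
      obtain ⟨S, hSi, hS⟩ := hV.isRich _ (hlim.add_one_lt hγ)
      obtain ⟨W, hW, hWS⟩ := exists_isRefinement_cbDeriv_nonempty hB hC hI hε hV.isOpen
        hV.pairwise_disjoint hSi hS
      exact ⟨⟨W, hW⟩, S, hSi, hWS⟩)
  exact ⟨W, hW, fun p => hB.isOpen (hW.mem_basis p), hW.pairwise_disjoint, hrich⟩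

end Refinement

section Construction

variable {X : Type u} [MetricSpace X] {ι : Type*} [Encodable ι] {a : ι → ℕ}
  {C : ∀ i, Set (Fin (a i) → X)} {κ : Cardinal.{u}} {B : Set (Set X)}

theorem IsRichLevel.exists_next (hκ : ℵ₀ ≤ κ) (hB : IsTopologicalBasis B)
    (hBκ : #B ≤ κ) (hC : ∀ i, IsClosed (C i)) {ℓ : ℕ} {V : List.Vector Bool ℓ → Set X}
    (hV : IsRichLevel C κ V) :
    ∃ W : List.Vector Bool (ℓ + 1) → Set X, IsRichLevel C κ W ∧
      (∀ v b, closure (W (b ::ᵥ v)) ⊆ V v) ∧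
      (∀ w, ediam (W w) ≤ ENNReal.ofReal ((1 / 2) ^ ℓ)) ∧
      ∀ i, encode i ≤ ℓ → IsRelIndepFamily (C i) W := by
  have hI : {i : ι | encode i ≤ ℓ}.Finite :=
    (Set.finite_le_nat ℓ).preimage encode_injective.injOn
  obtain ⟨W, hW, hWrich⟩ := hV.exists_isRefinement hκ hB hBκ hC hI
    (by positivity : (0 : ℝ) < (1 / 2) ^ ℓ)
  have he : Injective fun w : List.Vector Bool (ℓ + 1) => (w.tail, w.head) := fun w w' h => by
    simp only [Prod.mk.injEq] at h
    rw [← w.cons_head_tail, ← w'.cons_head_tail, h.1, h.2]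
  refine ⟨W ∘ fun w => (w.tail, w.head), hWrich.comp he, fun v b => ?_, fun w => hW.ediam_le _,
    fun i hi => (hW.relIndep i hi).comp he⟩
  simpa using hW.closure_subset (v, b)

theorem exists_cantorScheme (hκ : ℵ₀ ≤ κ) (hB : IsTopologicalBasis B)
    (hBκ : #B ≤ κ) (hC : ∀ i, IsClosed (C i)) (hX : IsRich C κ fun _ : Unit => (univ : Set X)) :
    ∃ A : List Bool → Set X, CantorScheme.ClosureAntitone A ∧ CantorScheme.Disjoint A ∧
      CantorScheme.VanishingDiam A ∧ (∀ l, (A l).Nonempty) ∧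
      ∀ i, ∀ᶠ L in atTop, IsRelIndepFamily (C i) fun v : List.Vector Bool L => A v.1 := by
  choose next hnext using fun ℓ (V : List.Vector Bool ℓ → Set X) (hV : IsRichLevel C κ V) =>
    hV.exists_next hκ hB hBκ hC
  have h0 : IsRichLevel C κ fun _ : List.Vector Bool 0 => (univ : Set X) :=
    ⟨fun _ => isOpen_univ, fun v w h => (h (Subsingleton.elim v w)).elim, fun γ hγ =>
      let ⟨S, hS, hne⟩ := hX γ hγ
      ⟨S, hS, fun _ => hne ()⟩⟩
  let level : ∀ ℓ, {V : List.Vector Bool ℓ → Set X // IsRichLevel C κ V} := fun ℓ =>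
    Nat.rec ⟨_, h0⟩ (fun ℓ V => ⟨next ℓ V.1 V.2, (hnext ℓ V.1 V.2).1⟩) ℓ
  let A : List Bool → Set X := fun l => (level l.length).1 ⟨l, rfl⟩
  have hA : ∀ ℓ (v : List.Vector Bool ℓ), A v.1 = (level ℓ).1 v := by
    rintro _ ⟨l, rfl⟩
    rfl
  have hdiam : ∀ l b, ediam (A (b :: l)) ≤ ENNReal.ofReal ((1 / 2) ^ l.length) :=
    fun l b => (hnext _ _ _).2.2.1 _
  refine ⟨A, fun l b => (hnext _ _ _).2.1 ⟨l, rfl⟩ b, fun l b c hbc => ?_, fun x => ?_,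
    fun l => ?_, fun i => ?_⟩
  · exact (level (l.length + 1)).2.pairwise_disjoint
      fun h => hbc (List.cons.inj (congrArg Subtype.val h)).1
  · rw [← tendsto_add_atTop_iff_nat 1]
    refine tendsto_of_tendsto_of_tendsto_of_le_of_le (h := fun n => ENNReal.ofReal ((1 / 2) ^ n))
      tendsto_const_nhds ?_ (fun _ => zero_le) fun n => ?_
    · simpa using ENNReal.tendsto_ofReal
        (tendsto_pow_atTop_nhds_zero_of_lt_one (by norm_num : (0 : ℝ) ≤ 1 / 2) (by norm_num))
    · simpa only [res_length, res_succ] using hdiam (res x n) (x n)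
  · obtain ⟨S, -, hS⟩ := (level l.length).2.isRich 0 (by simp)
    exact (hS ⟨l, rfl⟩).mono ((cbDeriv_subset _ _).trans inter_subset_right)
  · filter_upwards [eventually_gt_atTop (encode i)] with L hL
    obtain ⟨ℓ, rfl⟩ := Nat.exists_eq_add_one.2 (pos_of_gt hL)
    rw [show (fun v : List.Vector Bool (ℓ + 1) => A v.1) = (level (ℓ + 1)).1 from funext (hA _)]
    exact (hnext _ _ _).2.2.2 i (Nat.lt_add_one_iff.1 hL)

end Construction

section PerfectSet

theorem tendsto_update_not (α : ℕ → Bool) :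
    Tendsto (fun n => update α n (!α n)) atTop (𝓝 α) :=
  tendsto_pi_nhds.2 fun k => tendsto_const_nhds.congr' <|
    (eventually_gt_atTop k).mono fun _ hn => (update_of_ne hn.ne _ _).symm

theorem accPt_range_of_injective {Y : Type*} [TopologicalSpace Y] {f : (ℕ → Bool) → Y}
    (hf : Continuous f) (hinj : Injective f) (α : ℕ → Bool) : AccPt (f α) (𝓟 (range f)) :=
  accPt_iff_frequently.2 <| ((hf.tendsto α).comp (tendsto_update_not α)).frequently <|
    Frequently.of_forall fun n => ⟨hinj.ne fun h => by simpa using congrFun h n, mem_range_self _⟩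

theorem isPerfectSet_range {X : Type*} [MetricSpace X] [CompleteSpace X] {f : (ℕ → Bool) → X}
    (hf : Continuous f) (hinj : Injective f) : IsPerfectSet (range f) :=
  ⟨range_nonempty f, ⟨inferInstance, rfl, (isCompact_range hf).isClosed.completeSpace_coe⟩,
    forall_mem_range.2 (accPt_range_of_injective hf hinj)⟩

theorem eventually_injective_res {β : Type*} {n : ℕ} {α : Fin n → ℕ → β} (hα : Injective α) :
    ∀ᶠ L in atTop, Injective fun k => res (α k) L := by
  refine eventually_all.2 fun j => eventually_all.2 fun k => ?_
  by_cases hjk : j = k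
  · exact Eventually.of_forall fun _ _ => hjk
  · obtain ⟨m, hm⟩ := Function.ne_iff.1 (hα.ne hjk)
    filter_upwards [eventually_gt_atTop m] with L hL h
    exact (hm (res_eq_res.1 h hL)).elim

theorem exists_perfect_of_cantorScheme {X : Type*} [MetricSpace X] [CompleteSpace X]
    {ι : Type*} {a : ι → ℕ} {C : ∀ i, Set (Fin (a i) → X)} {A : List Bool → Set X}
    (hanti : CantorScheme.ClosureAntitone A) (hdisj : CantorScheme.Disjoint A)
    (hdiam : CantorScheme.VanishingDiam A) (hne : ∀ l, (A l).Nonempty)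
    (hC : ∀ i, ∀ᶠ L in atTop, IsRelIndepFamily (C i) fun v : List.Vector Bool L => A v.1) :
    ∃ P, IsPerfectSet P ∧ ∀ i, IsRelIndep (C i) P := by
  have hdom := hanti.map_of_vanishingDiam hdiam hne
  let f : (ℕ → Bool) → X := fun α => (CantorScheme.inducedMap A).2 ⟨α, hdom ▸ mem_univ α⟩
  have hf : Continuous f := hdiam.map_continuous.comp (continuous_id.subtype_mk _)
  have hinj : Injective f := hdisj.map_injective.comp fun α β h => congrArg Subtype.val h
  refine ⟨range f, isPerfectSet_range hf hinj, fun i s hs hsinj hsC => ?_⟩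
  choose α hα using hs
  have hαinj : Injective α := fun j k h => hsinj (by rw [← hα j, ← hα k, h])
  obtain ⟨L, hL, hres⟩ := ((hC i).and (eventually_injective_res hαinj)).exists
  exact hL (fun k => ⟨res (α k) L, res_length _ _⟩)
    (fun j k h => hres (congrArg Subtype.val h)) s
    (fun k => hα k ▸ CantorScheme.map_mem _ L) hsC

end PerfectSet

theorem xor_cbDeriv_eq_empty_or_isPerfectSet {X : Type u} [MetricSpace X] [CompleteSpace X]
    {ι : Type*} [Encodable ι] {a : ι → ℕ} {C : ∀ i, Set (Fin (a i) → X)}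
    (hC : ∀ i, IsClosed (C i)) {κ : Cardinal.{u}} (hκ : ℵ₀ ≤ κ) (hw : topWeight X ≤ κ) :
    Xor (∃ γ : Ordinal.{u}, γ < (Order.succ κ).ord ∧
        ∀ S : Set X, (∀ i, IsRelIndep (C i) S) → cbDeriv S γ = ∅)
      (∃ P : Set X, IsPerfectSet P ∧ ∀ i, IsRelIndep (C i) P) := by
  rw [xor_iff_iff_not]
  refine ⟨fun ⟨γ, _, hγ⟩ ⟨P, hP, hPi⟩ =>
    hP.1.ne_empty (cbDeriv_eq_self hP.2.2 γ ▸ hγ P hPi), fun hP => ?_⟩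
  by_contra hS
  have hrich : IsRich C κ fun _ : Unit => (univ : Set X) := fun γ hγ => by
    push Not at hS
    obtain ⟨S, hSi, hne⟩ := hS γ hγ
    exact ⟨S, hSi, fun _ => by rwa [inter_univ]⟩
  obtain ⟨B, hB, hBκ⟩ := exists_isTopologicalBasis_mk_eq_topWeight X
  obtain ⟨A, hanti, hdisj, hdiam, hne, hCA⟩ :=
    exists_cantorScheme hκ hB (hBκ.trans_le hw) hC hrich
  exact hP (exists_perfect_of_cantorScheme hanti hdisj hdiam hne hCA)

theorem statement0_general {X : Type u} [TopologicalSpace X] (hX : CompletelyMetrizable X)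
    (κ : Cardinal.{u}) (hκ : ℵ₀ ≤ κ) (hw : topWeight X = κ)
    (r : ℕ → ℕ) (R : ∀ n : ℕ, Set (Fin (r n) → X))
    (hR : ∀ n, IsFsigma (R n)) :
    Xor'
      (∃ γ : Ordinal.{u}, γ < (Order.succ κ).ord ∧
        ∀ S : Set X, (∀ n, IsRelIndep (R n) S) → cbDeriv S γ = ∅)
      (∃ P : Set X, IsPerfectSet P ∧ ∀ n, IsRelIndep (R n) P) := by
  obtain ⟨m, rfl, hcomplete⟩ := hX
  let _ := m
  choose F hF hRF using hR
  have key := xor_cbDeriv_eq_empty_or_isPerfectSet (C := fun p : ℕ × ℕ => F p.1 p.2)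
    (fun p => hF p.1 p.2) hκ hw.le
  simp only [Prod.forall] at key
  simp only [hRF, isRelIndep_iUnion_iff]
  exact key

theorem statement0 {X : Type u} [TopologicalSpace X] (hX : CompletelyMetrizable X)
    (κ : Cardinal.{u}) (hκ : ℵ₀ ≤ κ) (hw : topWeight X = κ)
    (r : ℕ → ℕ) (hr : ∀ n, 1 ≤ r n) (R : ∀ n : ℕ, Set (Fin (r n) → X))
    (hR : ∀ n, IsFsigma (R n)) :
    Xor'
      (∃ γ : Ordinal.{u}, γ < (Order.succ κ).ord ∧
        ∀ S : Set X, (∀ n, IsRelIndep (R n) S) → cbDeriv S γ = ∅)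
      (∃ P : Set X, IsPerfectSet P ∧ ∀ n, IsRelIndep (R n) P) :=
  statement0_general hX κ hκ hw r R hR
end

section
/- Let X be a Hausdorff topological space, let R₀,…,Rₙ be finitely many relations on X with each Rᵢ an open subset of X^{rᵢ} (rᵢ ≥ 1), and let F ⊆ X be a finite clique with respect to {R₀,…,Rₙ}. Then there exists a family {V_x : x ∈ F} of pairwise disjoint open subsets of X such that x ∈ V_x for every x ∈ F, and for every i ≤ n and every sequence x₁,…,x_{rᵢ} of pairwise distinct elements of F one has V_{x₁} × ⋯ × V_{x_{rᵢ}} ⊆ Rᵢ. -/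
open Set Filter Cardinal FirstOrder

universe u v

theorem statement4 {X : Type u} [TopologicalSpace X] [T2Space X]
    (N : ℕ) (r : Fin (N + 1) → ℕ) (hr : ∀ i, 1 ≤ r i)
    (R : ∀ i : Fin (N + 1), Set (Fin (r i) → X)) (hR : ∀ i, IsOpen (R i))
    (F : Finset X) (hF : ∀ i, IsRelClique (R i) (F : Set X)) :
    ∃ V : X → Set X,
      (∀ x ∈ F, IsOpen (V x)) ∧ (∀ x ∈ F, x ∈ V x) ∧
      (∀ x ∈ F, ∀ y ∈ F, x ≠ y → Disjoint (V x) (V y)) ∧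
      ∀ i : Fin (N + 1), ∀ s : Fin (r i) → X, (∀ j, s j ∈ F) → Function.Injective s →
        ∀ t : Fin (r i) → X, (∀ j, t j ∈ V (s j)) → t ∈ R i := by
  classical
  -- separating opens for pairs
  have sep : ∀ x y : X, ∃ U V : Set X, IsOpen U ∧ IsOpen V ∧ x ∈ U ∧ y ∈ V ∧
      (x ≠ y → Disjoint U V) := by
    intro x y
    by_cases h : x = y
    · exact ⟨Set.univ, Set.univ, isOpen_univ, isOpen_univ, trivial, trivial,
        fun hxy => absurd h hxy⟩
    · obtain ⟨U, V, hU, hV, hxU, hyV, hd⟩ := t2_separation h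
      exact ⟨U, V, hU, hV, hxU, hyV, fun _ => hd⟩
  choose A B hA hB hxA hyB hAB using sep
  -- boxes for each constraint
  have key : ∀ c : (i : Fin (N + 1)) × (Fin (r i) → {x // x ∈ F}),
      ∃ U : Fin (r c.1) → Set X, (∀ j, IsOpen (U j) ∧ (c.2 j : X) ∈ U j) ∧
        ∀ t : Fin (r c.1) → X, (∀ j, t j ∈ U j) →
          Function.Injective (fun j => (c.2 j : X)) → t ∈ R c.1 := by
    rintro ⟨i, f⟩
    by_cases hinj : Function.Injective (fun j => (f j : X))
    · have hmem : (fun j => (f j : X)) ∈ R i :=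
        hF i _ (fun j => (f j).2) hinj
      obtain ⟨u, hu, hsub⟩ := (isOpen_pi_iff'.1 (hR i)) _ hmem
      exact ⟨u, fun j => ⟨(hu j).1, (hu j).2⟩,
        fun t ht _ => hsub fun j _ => ht j⟩
    · exact ⟨fun _ => Set.univ, fun j => ⟨isOpen_univ, trivial⟩,
        fun t _ h => absurd h hinj⟩
  choose U hU1 hU2 using key
  refine ⟨fun x => (⋂ y ∈ F, A x y ∩ B y x) ∩
      ⋂ (c : (i : Fin (N + 1)) × (Fin (r i) → {x // x ∈ F})) (j) (_ : (c.2 j : X) = x),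
        U c j, ?_, ?_, ?_, ?_⟩
  · intro x _
    refine IsOpen.inter ?_ ?_
    · exact isOpen_biInter_finset fun y _ => (hA x y).inter (hB y x)
    · exact isOpen_iInter_of_finite fun c => isOpen_iInter_of_finite fun j =>
        isOpen_iInter_of_finite fun h => (hU1 c j).1
  · intro x _
    refine ⟨Set.mem_iInter₂.2 fun y _ => ⟨hxA x y, hyB y x⟩, ?_⟩
    exact Set.mem_iInter.2 fun c => Set.mem_iInter.2 fun j =>
      Set.mem_iInter.2 fun h => h ▸ (hU1 c j).2
  · intro x hx y hy hxy
    refine Set.disjoint_of_subset ?_ ?_ (hAB x y hxy)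
    · intro p hp
      exact (Set.mem_iInter₂.1 hp.1 y hy).1
    · intro p hp
      exact (Set.mem_iInter₂.1 hp.1 x hx).2
  · intro i s hs hinj t ht
    set c : (i : Fin (N + 1)) × (Fin (r i) → {x // x ∈ F}) :=
      ⟨i, fun j => ⟨s j, hs j⟩⟩ with hc
    have hinj' : Function.Injective (fun j => (c.2 j : X)) := hinj
    refine hU2 c t (fun j => ?_) hinj'
    have := (ht j).2
    exact Set.mem_iInter.1 (Set.mem_iInter.1 (Set.mem_iInter.1 this c) j) rfl
end

section
/- Let G be a completely metrizable topological group. If G has a dense-in-itself set of free generators (i.e. a dense-in-itself subset S ⊆ G that freely generates a free subgroup of G), then G contains a free subgroup generated by a perfect set, i.e. there exists a perfect set P ⊆ G freely generating a free subgroup of G. -/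
open Set Filter Cardinal FirstOrder

universe u v

/-- `S` freely generates a free subgroup of `G`: the canonical homomorphism from the
free group on `S` to `G` is injective. -/
def FreelyGenerates {G : Type*} [Group G] (S : Set G) : Prop :=
  Function.Injective (FreeGroup.lift fun s : S => (s : G))

/-! Enumerate the nontrivial words `w₀, w₁, …` and build a Cantor scheme of closed balls centred
at points of `S`: at level `n` there are `2ⁿ` pairwise disjoint balls of radius `≤ 2⁻ⁿ`, each
containing its two children, and any choice of points from distinct level-`n` balls makes
`w₀, …, wₙ₋₁` nontrivial. The next level exists because `S` has no isolated points (a second point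
of `S` near each centre), distinct points of `S` satisfy no relation, and `w ≠ 1` is an open
condition. The branches of the scheme converge to a continuous injection of the Cantor space into
`G`; its image is compact, has no isolated points, and satisfies no relation. -/

open Function Metric Topology

namespace FreeGroup

theorem exists_injective_map_eq {α : Type*} [DecidableEq α] (w : FreeGroup α) :
    ∃ (k : ℕ) (x : Fin k → α) (w' : FreeGroup (Fin k)), Injective x ∧ map x w' = w := by
  set L := w.toWord
  set T := (L.map Prod.fst).toFinset
  have hT (p : {p // p ∈ L}) : p.1.1 ∈ T := List.mem_toFinset.2 (List.mem_map_of_mem p.2)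
  refine ⟨T.card, fun i => T.equivFin.symm i,
    mk (L.attach.map fun p => (T.equivFin ⟨p.1.1, hT p⟩, p.1.2)),
    fun i j h => T.equivFin.symm.injective (Subtype.ext h), ?_⟩
  rw [map.mk, List.map_map]
  conv_rhs => rw [← mk_toWord (x := w)]
  congr 1
  simp [Function.comp_def, L, List.attach_map_subtype_val]

theorem lift_map {α β G : Type*} [Group G] (f : β → G) (g : α → β) (w : FreeGroup α) :
    lift f (map g w) = lift (f ∘ g) w := by
  rw [← MonoidHom.comp_apply]
  congr 1
  ext
  simp

theorem continuous_lift_apply {ι G : Type*} [Group G] [TopologicalSpace G] [IsTopologicalGroup G]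
    (w : FreeGroup ι) : Continuous fun y : ι → G => lift y w := by
  induction w using FreeGroup.induction_on with
  | C1 => simpa using continuous_const
  | of i => simpa using continuous_apply i
  | inv_of i h =>
    simp only [_root_.map_inv]
    exact h.inv
  | mul u v hu hv =>
    simp only [_root_.map_mul]
    exact hu.mul hv

end FreeGroup

theorem freelyGenerates_iff {G : Type*} [Group G] {S : Set G} :
    FreelyGenerates S ↔ ∀ (k : ℕ) (x : Fin k → G), Injective x → (∀ i, x i ∈ S) →
      ∀ w : FreeGroup (Fin k), w ≠ 1 → FreeGroup.lift x w ≠ 1 := by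
  classical
  constructor
  · intro hS k x hx hxS w hw h
    let x' : Fin k → S := fun i => ⟨x i, hxS i⟩
    have hx' : Injective x' := fun i j h => hx (congrArg Subtype.val h)
    have : FreeGroup.map x' w = 1 := hS (by rw [map_one, FreeGroup.lift_map]; exact h)
    exact hw (FreeGroup.map_injective hx' (this.trans (map_one _).symm))
  · intro h
    refine (injective_iff_map_eq_one _).2 fun w hw => by_contra fun hne => ?_
    obtain ⟨k, x, w', hx, rfl⟩ := w.exists_injective_map_eq
    refine h k (Subtype.val ∘ x) (Subtype.val_injective.comp hx) (fun i => (x i).2) w' ?_ ?_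
    · rintro rfl
      exact hne (map_one _)
    · rwa [FreeGroup.lift_map] at hw

theorem Pi.frequently_ne_nhds {ι : Type*} [Infinite ι] {Y : ι → Type*}
    [∀ i, TopologicalSpace (Y i)] [∀ i, Nontrivial (Y i)] (a : ∀ i, Y i) :
    ∃ᶠ b in 𝓝 a, b ≠ a := by
  classical
  choose y hy using fun i => exists_ne (a i)
  have : Tendsto (fun i => update a i (y i)) cofinite (𝓝 a) := by
    refine tendsto_pi_nhds.2 fun j => tendsto_nhds_of_eventually_eq ?_
    filter_upwards [eventually_cofinite_ne j] with i hi using update_of_ne hi.symm _ _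
  exact this.frequently (Frequently.of_forall fun i h => hy i (by simpa using congrFun h i))

theorem eventually_injective_restrict {ι Y : Type*} [Finite ι] {x : ι → ℕ → Y}
    (hx : Injective x) : ∀ᶠ N in atTop, Injective fun i (j : Fin N) => x i j := by
  have hsep (i i' : ι) (h : i ≠ i') :
      ∀ᶠ N in atTop, (fun j : Fin N => x i j) ≠ (fun j : Fin N => x i' j) := by
    obtain ⟨d, hd⟩ := Function.ne_iff.1 (hx.ne h)
    filter_upwards [eventually_gt_atTop d] with N hN using fun h' => hd (congrFun h' ⟨d, hN⟩)
  filter_upwards [eventually_all.2 fun i => eventually_all.2 fun i' =>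
    eventually_imp_distrib_left.2 (hsep i i')] with N hN i i' h
  by_contra hne
  exact hN i i' hne h

section Mycielski

variable {X : Type*} [MetricSpace X]

theorem isPerfectSet_range_of_continuous_injective {Φ : (ℕ → Bool) → X} (hΦ : Continuous Φ)
    (hinj : Injective Φ) : IsPerfectSet (range Φ) := by
  have : CompactSpace (range Φ) := isCompact_iff_compactSpace.1 (isCompact_range hΦ)
  refine ⟨range_nonempty Φ, ⟨inferInstance, rfl, inferInstance⟩, ?_⟩
  rintro _ ⟨a, rfl⟩
  rw [accPt_iff_frequently]
  exact (hΦ.tendsto a).frequently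
    ((Pi.frequently_ne_nhds a).mono fun b hb => ⟨hinj.ne hb, b, rfl⟩)

theorem eventually_pairwise_disjoint_closedBall {β : Type*} [Finite β] {c : β → X}
    (hc : Injective c) : ∀ᶠ ρ in 𝓝 (0 : ℝ), Pairwise (Disjoint on fun b => closedBall (c b) ρ) := by
  have hsep (b b' : β) (h : b ≠ b') :
      ∀ᶠ ρ in 𝓝 (0 : ℝ), Disjoint (closedBall (c b) ρ) (closedBall (c b') ρ) :=
    (eventually_lt_nhds (half_pos (dist_pos.2 (hc.ne h)))).mono fun ρ hρ =>
      closedBall_disjoint_closedBall (by linarith)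
  filter_upwards [eventually_all.2 fun b => eventually_all.2 fun b' =>
    eventually_imp_distrib_left.2 (hsep b b')] with ρ hρ b b' h using hρ b b' h

theorem eventually_closedBall_comp_subset {β : Type*} [Finite β] {c : β → X} {k : ℕ → ℕ}
    {U : ∀ m, Set (Fin (k m) → X)} (hU : ∀ m, IsOpen (U m))
    (hcU : ∀ m (x : Fin (k m) → β), Injective x → c ∘ x ∈ U m) (N : ℕ) :
    ∀ᶠ ρ in 𝓝 (0 : ℝ), ∀ m < N, ∀ x : Fin (k m) → β, Injective x → closedBall (c ∘ x) ρ ⊆ U m := by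
  have hsmall (m : ℕ) (x : Fin (k m) → β) (hx : Injective x) :
      ∀ᶠ ρ in 𝓝 (0 : ℝ), closedBall (c ∘ x) ρ ⊆ U m :=
    eventually_closedBall_subset ((hU m).mem_nhds (hcU m x hx))
  filter_upwards [(Set.finite_lt_nat N).eventually_all.2 fun m _ => eventually_all.2 fun x =>
    eventually_imp_distrib_left.2 (hsmall m x)] with ρ hρ m hm x hx using hρ m hm x hx

structure DisjointClosedBallsIn (S : Set X) {β : Type*} (c : β → X) (r : ℝ) : Prop where
  pos : 0 < r
  mem : ∀ b, c b ∈ S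
  disjoint : Pairwise (Disjoint on fun b => closedBall (c b) r)

variable {S : Set X}

theorem DisjointClosedBallsIn.exists_children (hS : ∀ x ∈ S, AccPt x (𝓟 S)) {n : ℕ}
    {c : (Fin n → Bool) → X} {r : ℝ} (h : DisjointClosedBallsIn S c r) :
    ∃ c' : (Fin (n + 1) → Bool) → X,
      Injective c' ∧ (∀ σ, c' σ ∈ S) ∧ ∀ σ, dist (c' σ) (c (Fin.init σ)) < r / 2 := by
  have hpick (σ : Fin n → Bool) : ∃ p ∈ ball (c σ) (r / 2) ∩ S, p ≠ c σ :=
    accPt_iff_nhds.1 (hS _ (h.mem σ)) _ (ball_mem_nhds _ (half_pos h.pos))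
  choose p hp hpne using hpick
  let c' : (Fin (n + 1) → Bool) → X := fun σ =>
    if σ (Fin.last n) then p (Fin.init σ) else c (Fin.init σ)
  have hnear (σ) : dist (c' σ) (c (Fin.init σ)) < r / 2 := by
    by_cases hσ : σ (Fin.last n) <;> simp [c', hσ, mem_ball.1 (hp _).1, h.pos]
  refine ⟨c', fun σ τ hστ => ?_, fun σ => ?_, hnear⟩
  · by_cases hinit : Fin.init σ = Fin.init τ
    · rw [← Fin.snoc_init_self σ, ← Fin.snoc_init_self τ, hinit]
      congr 1
      by_contra hlast
      cases hσ : σ (Fin.last n) <;> cases hτ : τ (Fin.last n) <;>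
        simp [c', hσ, hτ, hinit] at hστ hlast
      exacts [hpne _ hστ.symm, hpne _ hστ]
    · have hmem (σ) : c' σ ∈ closedBall (c (Fin.init σ)) r :=
        mem_closedBall.2 (by linarith [hnear σ, h.pos])
      exact ((h.disjoint hinit).ne_of_mem (hmem σ) (hmem τ) hστ).elim
  · by_cases hσ : σ (Fin.last n) <;> simp [c', hσ, (hp _).2, h.mem]

variable {k : ℕ → ℕ} {U : ∀ m, Set (Fin (k m) → X)}

theorem DisjointClosedBallsIn.exists_refinement (hS : ∀ x ∈ S, AccPt x (𝓟 S))
    (hU : ∀ m, IsOpen (U m)) (hSU : ∀ m (x : Fin (k m) → X), Injective x → (∀ i, x i ∈ S) → x ∈ U m)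
    {n : ℕ} {c : (Fin n → Bool) → X} {r : ℝ} (h : DisjointClosedBallsIn S c r) :
    ∃ (c' : (Fin (n + 1) → Bool) → X) (r' : ℝ), DisjointClosedBallsIn S c' r' ∧
      r' ≤ 2⁻¹ ^ (n + 1) ∧ (∀ σ, closedBall (c' σ) r' ⊆ closedBall (c (Fin.init σ)) r) ∧
      ∀ m < n + 1, ∀ x : Fin (k m) → (Fin (n + 1) → Bool), Injective x →
        closedBall (c' ∘ x) r' ⊆ U m := by
  obtain ⟨c', hinj, hc'S, hnear⟩ := h.exists_children hS
  have hcU (m) (x : Fin (k m) → (Fin (n + 1) → Bool)) (hx : Injective x) : c' ∘ x ∈ U m :=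
    hSU m _ (hinj.comp hx) fun i => hc'S _
  obtain ⟨ρ, hpos, hpow, hhalf, hdisj, hword⟩ : ∃ ρ : ℝ, 0 < ρ ∧ ρ ≤ 2⁻¹ ^ (n + 1) ∧ ρ ≤ r / 2 ∧
      Pairwise (Disjoint on fun σ => closedBall (c' σ) ρ) ∧ ∀ m < n + 1,
        ∀ x : Fin (k m) → (Fin (n + 1) → Bool), Injective x → closedBall (c' ∘ x) ρ ⊆ U m := by
    refine Eventually.exists (f := 𝓝[>] (0 : ℝ)) ?_
    filter_upwards [self_mem_nhdsWithin,
      nhdsWithin_le_nhds (eventually_le_nhds (by positivity : (0 : ℝ) < 2⁻¹ ^ (n + 1))),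
      nhdsWithin_le_nhds (eventually_le_nhds (half_pos h.pos)),
      nhdsWithin_le_nhds (eventually_pairwise_disjoint_closedBall hinj),
      nhdsWithin_le_nhds (eventually_closedBall_comp_subset hU hcU (n + 1))]
      with ρ h₁ h₂ h₃ h₄ h₅ using ⟨h₁, h₂, h₃, h₄, h₅⟩
  exact ⟨c', ρ, ⟨hpos, hc'S, hdisj⟩, hpow,
    fun σ => closedBall_subset_closedBall' (by linarith [hnear σ]), hword⟩

theorem exists_cantorScheme_s6 (hne : S.Nonempty) (hS : ∀ x ∈ S, AccPt x (𝓟 S))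
    (hU : ∀ m, IsOpen (U m))
    (hSU : ∀ m (x : Fin (k m) → X), Injective x → (∀ i, x i ∈ S) → x ∈ U m) :
    ∃ (c : ∀ n, (Fin n → Bool) → X) (r : ℕ → ℝ), (∀ n, DisjointClosedBallsIn S (c n) (r n)) ∧
      (∀ n, r n ≤ 2⁻¹ ^ n) ∧
      (∀ n σ, closedBall (c (n + 1) σ) (r (n + 1)) ⊆ closedBall (c n (Fin.init σ)) (r n)) ∧
      ∀ n, ∀ m < n, ∀ x : Fin (k m) → (Fin n → Bool), Injective x →
        closedBall (c n ∘ x) (r n) ⊆ U m := by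
  obtain ⟨s₀, hs₀⟩ := hne
  let Stage (n : ℕ) := {p : ((Fin n → Bool) → X) × ℝ // DisjointClosedBallsIn S p.1 p.2}
  let stage₀ : Stage 0 :=
    ⟨(fun _ => s₀, 1), one_pos, fun _ => hs₀, fun σ τ h => (h (Subsingleton.elim σ τ)).elim⟩
  have hnext (n : ℕ) (st : Stage n) : ∃ st' : Stage (n + 1), st'.1.2 ≤ 2⁻¹ ^ (n + 1) ∧
      (∀ σ, closedBall (st'.1.1 σ) st'.1.2 ⊆ closedBall (st.1.1 (Fin.init σ)) st.1.2) ∧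
      ∀ m < n + 1, ∀ x : Fin (k m) → (Fin (n + 1) → Bool), Injective x →
        closedBall (st'.1.1 ∘ x) st'.1.2 ⊆ U m :=
    let ⟨c', r', h, hpow, hnest, hword⟩ := st.2.exists_refinement hS hU hSU
    ⟨⟨(c', r'), h⟩, hpow, hnest, hword⟩
  choose next hpow hnest hword using hnext
  let F (n : ℕ) : Stage n := Nat.rec stage₀ next n
  refine ⟨fun n => (F n).1.1, fun n => (F n).1.2, fun n => (F n).2, ?_,
    fun n => hnest n (F n), ?_⟩
  · rintro (_ | n)
    · exact le_of_eq (pow_zero _).symm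
    · exact hpow n (F n)
  · rintro (_ | n) m hm
    · exact absurd hm (Nat.not_lt_zero m)
    · exact hword n (F n) m hm

theorem exists_continuous_injective_of_nested [CompleteSpace X] {c : ∀ n, (Fin n → Bool) → X}
    {r : ℕ → ℝ} (hr₀ : ∀ n, 0 ≤ r n) (hr : ∀ n, r n ≤ 2⁻¹ ^ n)
    (hdisj : ∀ n, Pairwise (Disjoint on fun σ => closedBall (c n σ) (r n)))
    (hnest : ∀ n σ, closedBall (c (n + 1) σ) (r (n + 1)) ⊆ closedBall (c n (Fin.init σ)) (r n)) :
    ∃ Φ : (ℕ → Bool) → X, Continuous Φ ∧ Injective Φ ∧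
      ∀ b n, Φ b ∈ closedBall (c n fun i => b i) (r n) := by
  let a (n : ℕ) (b : ℕ → Bool) : X := c n fun i => b i
  have hmem (b : ℕ → Bool) {n m : ℕ} (h : n ≤ m) : a m b ∈ closedBall (a n b) (r n) := by
    have hanti : Antitone fun n => closedBall (a n b) (r n) :=
      antitone_nat_of_succ_le fun n => hnest n _
    exact hanti h (mem_closedBall_self (hr₀ m))
  have hlim (b : ℕ → Bool) : ∃ y, Tendsto (fun n => a n b) atTop (𝓝 y) := by
    refine cauchySeq_tendsto_of_complete (cauchySeq_of_le_geometric 2⁻¹ 1 (by norm_num) fun n => ?_)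
    rw [one_mul, dist_comm]
    exact (mem_closedBall.1 (hmem b n.le_succ)).trans (hr n)
  choose Φ hΦ using hlim
  have hΦmem (b : ℕ → Bool) (n : ℕ) : Φ b ∈ closedBall (a n b) (r n) :=
    isClosed_closedBall.mem_of_tendsto (hΦ b) (eventually_atTop.2 ⟨n, fun m hm => hmem b hm⟩)
  refine ⟨Φ, ?_, fun b b' h => by_contra fun hne => ?_, hΦmem⟩
  · -- `Φ` is a uniform limit of the maps `a n`, each of which depends on finitely many coordinates
    refine TendstoUniformly.continuous (F := a) (p := atTop)
      (Metric.tendstoUniformly_iff.2 fun ε hε => ?_) (Frequently.of_forall fun n => ?_)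
    · obtain ⟨n, hn⟩ := exists_pow_lt_of_lt_one hε (by norm_num : (2 : ℝ)⁻¹ < 1)
      filter_upwards [eventually_ge_atTop n] with m hm b
      calc dist (Φ b) (a m b) ≤ r m := hΦmem b m
        _ ≤ 2⁻¹ ^ m := hr m
        _ ≤ 2⁻¹ ^ n := pow_le_pow_of_le_one (by norm_num) (by norm_num) hm
        _ < ε := hn
    · exact continuous_of_discreteTopology.comp (continuous_pi fun i => continuous_apply _)
  · obtain ⟨j, hj⟩ := Function.ne_iff.1 hne
    have hσ : (fun i : Fin (j + 1) => b i) ≠ (fun i : Fin (j + 1) => b' i) :=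
      fun h' => hj (congrFun h' (Fin.last j))
    exact (hdisj (j + 1) hσ).ne_of_mem (hΦmem b _) (hΦmem b' _) h

/-- A form of Mycielski's theorem. -/
theorem exists_continuous_injective_comp_mem [CompleteSpace X] (hne : S.Nonempty)
    (hS : ∀ x ∈ S, AccPt x (𝓟 S)) (hU : ∀ m, IsOpen (U m))
    (hSU : ∀ m (x : Fin (k m) → X), Injective x → (∀ i, x i ∈ S) → x ∈ U m) :
    ∃ Φ : (ℕ → Bool) → X, Continuous Φ ∧ Injective Φ ∧
      ∀ m (x : Fin (k m) → ℕ → Bool), Injective x → Φ ∘ x ∈ U m := by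
  obtain ⟨c, r, hc, hr, hnest, hword⟩ := exists_cantorScheme_s6 hne hS hU hSU
  obtain ⟨Φ, hcont, hinj, hmem⟩ := exists_continuous_injective_of_nested
    (fun n => (hc n).pos.le) hr (fun n => (hc n).disjoint) hnest
  refine ⟨Φ, hcont, hinj, fun m x hx => ?_⟩
  obtain ⟨N, hmN, hxN⟩ := ((eventually_gt_atTop m).and (eventually_injective_restrict hx)).exists
  exact hword N m hmN _ hxN ((dist_pi_le_iff (hc N).pos.le).2 fun i => hmem (x i) N)

end Mycielski

theorem statement6 {G : Type u} [Group G] [TopologicalSpace G] [IsTopologicalGroup G]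
    (hG : CompletelyMetrizable G)
    (h : ∃ S : Set G, DenseInItselfSet S ∧ FreelyGenerates S) :
    ∃ P : Set G, IsPerfectSet P ∧ FreelyGenerates P := by
  obtain ⟨S, ⟨hne, hS⟩, hfree⟩ := h
  obtain ⟨d, rfl, hcomplete⟩ := hG
  let _ : MetricSpace G := d
  have : Nonempty (Σ k, {w : FreeGroup (Fin k) // w ≠ 1}) :=
    ⟨⟨1, FreeGroup.of 0, FreeGroup.of_ne_one 0⟩⟩
  obtain ⟨e, he⟩ := exists_surjective_nat (Σ k, {w : FreeGroup (Fin k) // w ≠ 1})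
  obtain ⟨Φ, hcont, hinj, hΦ⟩ := exists_continuous_injective_comp_mem hne hS
    (U := fun m => {y | FreeGroup.lift y (e m).2.1 ≠ 1})
    (fun m => isOpen_ne_fun (FreeGroup.continuous_lift_apply _) continuous_const)
    (fun m x hx hxS => freelyGenerates_iff.1 hfree _ x hx hxS _ (e m).2.2)
  refine ⟨range Φ, isPerfectSet_range_of_continuous_injective hcont hinj,
    freelyGenerates_iff.2 fun k x hx hxP w hw => ?_⟩
  choose y hy using hxP
  obtain ⟨m, hm⟩ := he ⟨k, w, hw⟩
  have hword := hΦ m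
  rw [hm] at hword
  have hyx : Φ ∘ y = x := funext hy
  exact hyx ▸ hword y fun i j hij => hx (by rw [← hy i, ← hy j, hij])
end

section
/- Let F ⊆ {2,3,4,…} be a finite set of integers, let κ be an infinite cardinal, and let G be a completely metrizable topological group of weight ≤ κ. If for every ordinal γ < κ⁺ there exists a set S_γ ⊆ G of Cantor–Bendixson rank ≥ γ generating a subgroup in which the order of every nonidentity element belongs to F, then there exists a perfect set P ⊆ G such that in the subgroup generated by P the order of every nonidentity element belongs to F. -/
open Set Filter Cardinal FirstOrder

universe u v

/-! Only rank `≥ 2` is needed: take `S` with a non-isolated point `x ∈ S` and let `P` be the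
closure of the subgroup generated by `S`. As a closed subgroup of `G` it is completely metrizable,
and translations inside `P` carry the accumulation point `x` to every point of `P`, so `P` is
perfect. Since `F` is finite, the orders of nonidentity elements stay in `F` under closure. -/

section Orders

variable {G : Type*} [Group G]

def divisorClosedPart (F : Finset ℕ) : Finset ℕ :=
  F.filter fun k => ∀ d ∈ k.divisors, 2 ≤ d → d ∈ F

theorem orderOf_mem_divisorClosedPart {F : Finset ℕ} (hF : 0 ∉ F) {K : Subgroup G}
    (hK : ∀ g ∈ K, g ≠ 1 → orderOf g ∈ F) {g : G} (hg : g ∈ K) (hg1 : g ≠ 1) :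
    orderOf g ∈ divisorClosedPart F := by
  have hgF := hK g hg hg1
  have hg0 : orderOf g ≠ 0 := fun h => hF (h ▸ hgF)
  refine Finset.mem_filter.2 ⟨hgF, fun d hd hd2 => ?_⟩
  have hdvd := (Nat.mem_divisors.1 hd).1
  have hpow := orderOf_pow_orderOf_div hg0 hdvd
  refine hpow ▸ hK _ (pow_mem hg _) fun h1 => ?_
  rw [h1, orderOf_one] at hpow
  omega

theorem orderOf_mem_of_pow_eq_one {F : Finset ℕ} (hF : 0 ∉ F) {g : G} {k : ℕ}
    (hk : k ∈ divisorClosedPart F) (hgk : g ^ k = 1) (hg1 : g ≠ 1) : orderOf g ∈ F := by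
  obtain ⟨hkF, hdiv⟩ := Finset.mem_filter.1 hk
  have hk0 : k ≠ 0 := fun h => hF (h ▸ hkF)
  have hg1' : orderOf g ≠ 1 := mt orderOf_eq_one_iff.1 hg1
  have hdvd : orderOf g ∣ k := orderOf_dvd_of_pow_eq_one hgk
  have hg0 : orderOf g ≠ 0 := fun h => hk0 (Nat.eq_zero_of_zero_dvd (h ▸ hdvd))
  exact hdiv _ (Nat.mem_divisors.2 ⟨hdvd, hk0⟩) (by omega)

theorem isClosed_setOf_exists_pow_eq_one [TopologicalSpace G] [ContinuousMul G] [T1Space G]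
    (s : Finset ℕ) : IsClosed {g : G | ∃ k ∈ s, g ^ k = 1} := by
  have hs : {g : G | ∃ k ∈ s, g ^ k = 1} = ⋃ k ∈ (s : Set ℕ), (· ^ k) ⁻¹' {1} := by
    ext; simp
  exact hs ▸ s.finite_toSet.isClosed_biUnion fun k _ =>
    isClosed_singleton.preimage (continuous_pow k)

/- Every element of `K` is killed by some `k ∈ insert 1 (divisorClosedPart F)`; this is a closed
condition, so it passes to the closure, and it forces the order to lie in `F ∪ {1}`. -/
theorem orderOf_mem_of_mem_topologicalClosure [TopologicalSpace G] [IsTopologicalGroup G]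
    [T1Space G] {F : Finset ℕ} (hF : 0 ∉ F) {K : Subgroup G}
    (hK : ∀ g ∈ K, g ≠ 1 → orderOf g ∈ F) {g : G} (hg : g ∈ K.topologicalClosure)
    (hg1 : g ≠ 1) : orderOf g ∈ F := by
  have hKC : (K : Set G) ⊆ {g | ∃ k ∈ insert 1 (divisorClosedPart F), g ^ k = 1} := by
    intro g hg
    by_cases hg1 : g = 1
    · exact ⟨1, Finset.mem_insert_self _ _, by simp [hg1]⟩
    · exact ⟨_, Finset.mem_insert_of_mem (orderOf_mem_divisorClosedPart hF hK hg hg1),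
        pow_orderOf_eq_one g⟩
  rw [← SetLike.mem_coe, Subgroup.topologicalClosure_coe] at hg
  obtain ⟨k, hk, hgk⟩ := closure_minimal hKC (isClosed_setOf_exists_pow_eq_one _) hg
  rcases Finset.mem_insert.1 hk with rfl | hk
  · exact absurd (pow_one g ▸ hgk) hg1
  · exact orderOf_mem_of_pow_eq_one hF hk hgk hg1

end Orders

theorem Subgroup.accPt_of_accPt_of_mem {G : Type*} [Group G] [TopologicalSpace G]
    [ContinuousMul G] {H : Subgroup G} {x y : G} (hx : x ∈ H) (hacc : AccPt x (𝓟 H))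
    (hy : y ∈ H) : AccPt y (𝓟 H) := by
  have ha : y * x⁻¹ ∈ H := H.mul_mem hy (H.inv_mem hx)
  have himg : (y * x⁻¹ * ·) '' H = H := by
    ext z
    refine ⟨?_, fun hz => ⟨(y * x⁻¹)⁻¹ * z, H.mul_mem (H.inv_mem ha) hz, by group⟩⟩
    rintro ⟨w, hw, rfl⟩
    exact H.mul_mem ha hw
  simpa only [map_principal, himg, inv_mul_cancel_right] using
    hacc.map (continuous_const_mul (y * x⁻¹)).continuousAt (mul_right_injective _)

theorem completelyMetrizable_iff {Y : Type*} [TopologicalSpace Y] :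
    CompletelyMetrizable Y ↔ TopologicalSpace.IsCompletelyMetrizableSpace Y :=
  ⟨fun h => ⟨h⟩, fun h => h.complete⟩

theorem isPerfectSet_of_isClosed_subgroup {G : Type*} [Group G] [TopologicalSpace G]
    [ContinuousMul G] [TopologicalSpace.IsCompletelyMetrizableSpace G] {H : Subgroup G}
    (hH : IsClosed (H : Set G)) {x : G} (hx : x ∈ H) (hacc : AccPt x (𝓟 H)) :
    IsPerfectSet (H : Set G) :=
  ⟨⟨1, H.one_mem⟩, completelyMetrizable_iff.2 hH.isCompletelyMetrizableSpace,
    fun _ hy => H.accPt_of_accPt_of_mem hx hacc hy⟩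

theorem cbDeriv_one {X : Type u} [TopologicalSpace X] (A : Set X) :
    cbDeriv A (1 : Ordinal.{v}) = {x ∈ A | AccPt x (𝓟 A)} := by
  rw [cbDeriv, ← zero_add 1, Ordinal.limitRecOn_add_one, Ordinal.limitRecOn_zero]

theorem two_lt_ord_succ {κ : Cardinal.{u}} (hκ : ℵ₀ ≤ κ) :
    (2 : Ordinal.{u}) < (Order.succ κ).ord := by
  rw [Cardinal.lt_ord, Ordinal.card_ofNat]
  exact (Cardinal.natCast_lt_aleph0 (n := 2)).trans_le hκ |>.trans (Order.lt_succ κ)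

theorem statement15_general (F : Finset ℕ) (hF : ∀ k ∈ F, 2 ≤ k)
    (κ : Cardinal.{u}) (hκ : ℵ₀ ≤ κ)
    {G : Type u} [Group G] [TopologicalSpace G] [IsTopologicalGroup G]
    (hG : CompletelyMetrizable G)
    (h : ∀ γ : Ordinal.{u}, γ < (Order.succ κ).ord → ∃ S : Set G,
      (∀ γ' : Ordinal.{u}, γ' < γ → (cbDeriv S γ').Nonempty) ∧
      ∀ g ∈ Subgroup.closure S, g ≠ 1 → orderOf g ∈ F) :
    ∃ P : Set G, IsPerfectSet P ∧ ∀ g ∈ Subgroup.closure P, g ≠ 1 → orderOf g ∈ F := by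
  have := completelyMetrizable_iff.1 hG
  obtain ⟨S, hS, hSF⟩ := h 2 (two_lt_ord_succ hκ)
  obtain ⟨x, hxS, hxacc⟩ : {x ∈ S | AccPt x (𝓟 S)}.Nonempty := cbDeriv_one S ▸ hS 1 one_lt_two
  set H := (Subgroup.closure S).topologicalClosure
  have hSH : S ⊆ H := fun _ hs => Subgroup.le_topologicalClosure _ (Subgroup.subset_closure hs)
  refine ⟨H, isPerfectSet_of_isClosed_subgroup (Subgroup.isClosed_topologicalClosure _) (hSH hxS)
    (hxacc.mono (principal_mono.2 hSH)), fun g hg hg1 => ?_⟩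
  rw [Subgroup.closure_eq] at hg
  exact orderOf_mem_of_mem_topologicalClosure (fun h0 => by simpa using hF 0 h0) hSF hg hg1

theorem statement15 (F : Finset ℕ) (hF : ∀ k ∈ F, 2 ≤ k)
    (κ : Cardinal.{u}) (hκ : ℵ₀ ≤ κ)
    {G : Type u} [Group G] [TopologicalSpace G] [IsTopologicalGroup G]
    (hG : CompletelyMetrizable G) (hw : topWeight G ≤ κ)
    (h : ∀ γ : Ordinal.{u}, γ < (Order.succ κ).ord → ∃ S : Set G,
      (∀ γ' : Ordinal.{u}, γ' < γ → (cbDeriv S γ').Nonempty) ∧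
      ∀ g ∈ Subgroup.closure S, g ≠ 1 → orderOf g ∈ F) :
    ∃ P : Set G, IsPerfectSet P ∧ ∀ g ∈ Subgroup.closure P, g ≠ 1 → orderOf g ∈ F :=
  statement15_general F hF κ hκ hG h
end
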